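/- Let G = (V, E, d, w) be a locally finite weighted graph, let u ∼ v, and let B be a ∗-coupling between μ_u and μ_v. For any α ∈ [0,1) with (1−α)B(u,v) ≤ 1, the function A = 𝟙_{(u,v)} − (1−α)B, where 𝟙_{(u,v)} is the indicator of the single pair (u,v), is a coupling between μ_u^α and μ_v^α. -/

import Mathlib

open Filter Finset
open scoped Classical

namespace RicciWeighted

variable {V : Type*}

/-- The length of a walk with respect to an edge-length function `d`:
the sum of the lengths of its edges. -/
noncomputable def walkLength (G : SimpleGraph V) (d : V → V → ℝ) {x y : V}
    (p : G.Walk x y) : ℝ :=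
  (p.darts.map fun e => d e.toProd.1 e.toProd.2).sum

/-- `d x y` is the shortest weighted path distance between `x` and `y`
(i.e. the greatest lower bound of the lengths of walks joining them). -/
def IsShortestDist (G : SimpleGraph V) (d : V → V → ℝ) : Prop :=
  ∀ x y : V, IsGLB {r : ℝ | ∃ p : G.Walk x y, walkLength G d p = r} (d x y)

/-- The total weight `D_x = ∑_{y ∼ x} w_{x y}` at a vertex `x`. -/
noncomputable def deg (G : SimpleGraph V) [∀ v : V, Fintype (G.neighborSet v)]
    (w : V → V → ℝ) (x : V) : ℝ :=
  ∑ y ∈ G.neighborFinset x, w x y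

/-- The random-walk probability distribution `μ_x^α`. -/
noncomputable def mu (G : SimpleGraph V) [∀ v : V, Fintype (G.neighborSet v)]
    (w : V → V → ℝ) (α : ℝ) (x : V) : V → ℝ :=
  fun z => if z = x then α else if G.Adj x z then (1 - α) * w x z / deg G w x else 0

/-- A coupling between two finitely supported distributions `μ₁` and `μ₂`. -/
structure IsCoupling (μ₁ μ₂ : V → ℝ) (A : V → V → ℝ) : Prop where
  mem_Icc : ∀ x y : V, A x y ∈ Set.Icc (0 : ℝ) 1
  finite_support : (Function.support fun p : V × V => A p.1 p.2).Finite
  marginal_fst : ∀ x : V, ∑ᶠ y : V, A x y = μ₁ x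
  marginal_snd : ∀ y : V, ∑ᶠ x : V, A x y = μ₂ y

/-- The transport cost `∑_{x,y} A(x,y) d(x,y)` of a plan `A`. -/
noncomputable def cost (d : V → V → ℝ) (A : V → V → ℝ) : ℝ :=
  ∑ᶠ p : V × V, A p.1 p.2 * d p.1 p.2

/-- The Wasserstein transportation distance between `μ₁` and `μ₂`. -/
noncomputable def W (d : V → V → ℝ) (μ₁ μ₂ : V → ℝ) : ℝ :=
  sInf {r : ℝ | ∃ A : V → V → ℝ, IsCoupling μ₁ μ₂ A ∧ cost d A = r}

/-- The `α`-Ricci curvature `κ_α(x,y) = 1 - W(μ_x^α, μ_y^α)/d(x,y)`. -/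
noncomputable def kappaAlpha (G : SimpleGraph V) [∀ v : V, Fintype (G.neighborSet v)]
    (d w : V → V → ℝ) (α : ℝ) (x y : V) : ℝ :=
  1 - W d (mu G w α x) (mu G w α y) / d x y

/-- `k` is the (Lin–Lu–Yau) Ricci curvature of the pair `(x, y)`:
the limit of `κ_α(x,y)/(1-α)` as `α → 1⁻`. -/
def IsRicci (G : SimpleGraph V) [∀ v : V, Fintype (G.neighborSet v)]
    (d w : V → V → ℝ) (x y : V) (k : ℝ) : Prop :=
  Tendsto (fun α : ℝ => kappaAlpha G d w α x y / (1 - α))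
    (nhdsWithin 1 (Set.Iio 1)) (nhds k)

/-- A `∗`-coupling between `μ_u` and `μ_v`. -/
structure IsStarCoupling (μu μv : V → ℝ) (u v : V) (B : V → V → ℝ) : Prop where
  pos : 0 < B u v
  nonpos : ∀ x y : V, (x, y) ≠ (u, v) → B x y ≤ 0
  finite_support : (Function.support fun p : V × V => B p.1 p.2).Finite
  sum_zero : ∑ᶠ p : V × V, B p.1 p.2 = 0
  marginal_fst : ∀ x : V, x ≠ u → ∑ᶠ y : V, B x y = -μu x
  marginal_snd : ∀ y : V, y ≠ v → ∑ᶠ x : V, B x y = -μv y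

/-- The `Treelike` property: for every edge `(x,y)` and every `k ∈ N(x)`, `l ∈ N(y)`,
`d(k,l) = d(k,x) + d(x,y) + d(y,l)`. -/
def Treelike (G : SimpleGraph V) (d : V → V → ℝ) : Prop :=
  ∀ x y : V, G.Adj x y →
    ∀ k : V, (k = x ∨ G.Adj x k) → ∀ l : V, (l = y ∨ G.Adj y l) →
      d k l = d k x + d x y + d y l

/-- `f` is Lip(1) with respect to `d`. -/
def Lip1 (d : V → V → ℝ) (f : V → ℝ) : Prop := ∀ x y : V, f x - f y ≤ d x y

end RicciWeighted

/-!
Off `(u, v)` the entries of `B` are nonpositive and all entries sum to zero, so `-B x y ≤ B u v`,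
which together with `(1 - α) B u v ≤ 1` puts every entry of `A` in `[0, 1]`. The rows `x ≠ u`
of `B` sum to `-μ_u x`; as `μ_u` has mass one and vanishes at `u`, the row of `u` sums to `1`.
Hence the rows of `A` sum to `α` at `u` and to `(1 - α) μ_u x = μ_u^α x` elsewhere, and the
columns follow by transposing `B`.
-/

namespace RicciWeighted

variable {V : Type*} {μu μv : V → ℝ} {u v : V} {B : V → V → ℝ}

theorem IsStarCoupling.transpose (hB : IsStarCoupling μu μv u v B) :
    IsStarCoupling μv μu v u (fun x y => B y x) where
  pos := hB.pos
  nonpos x y h := hB.nonpos y x fun h' => h (by simp_all)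
  finite_support :=
    hB.finite_support.preimage (Equiv.prodComm V V).injective.injOn
  sum_zero := by
    rw [← hB.sum_zero]
    exact finsum_comp_equiv (Equiv.prodComm V V) (f := fun p : V × V => B p.1 p.2)
  marginal_fst := hB.marginal_snd
  marginal_snd := hB.marginal_fst

theorem IsStarCoupling.finite_support_row (hB : IsStarCoupling μu μv u v B) (x : V) :
    (Function.support (B x)).Finite :=
  hB.finite_support.preimage (Prod.mk_right_injective x).injOn

theorem IsStarCoupling.neg_le (hB : IsStarCoupling μu μv u v B) {x y : V}
    (hxy : (x, y) ≠ (u, v)) : -B x y ≤ B u v := by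
  set δ : V × V → ℝ := fun p => if p = (u, v) then B u v else 0
  have hδ : ∑ᶠ p, δ p = B u v := by
    rw [finsum_eq_single δ (u, v) fun p hp => if_neg hp]
    exact if_pos rfl
  have hδfin : (Function.support δ).Finite :=
    (Set.finite_singleton (u, v)).subset fun p hp => by_contra fun h => hp (if_neg h)
  have hnonneg : ∀ p : V × V, 0 ≤ δ p - B p.1 p.2 := by
    rintro ⟨a, b⟩
    by_cases hp : (a, b) = (u, v)
    · obtain ⟨rfl, rfl⟩ := Prod.ext_iff.mp hp
      simp [δ]
    · simpa [δ, hp] using hB.nonpos a b hp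
  have hle := single_le_finsum (x, y)
    ((hδfin.union hB.finite_support).subset (Function.support_sub _ _)) hnonneg
  rw [finsum_sub_distrib hδfin hB.finite_support, hδ, hB.sum_zero, sub_zero] at hle
  simpa [δ, hxy] using hle

theorem IsStarCoupling.finsum_row_self (hB : IsStarCoupling μu μv u v B)
    (hμ : ∑ᶠ x, μu x = 1) (hμu : μu u = 0) : ∑ᶠ y, B u y = 1 := by
  set r : V → ℝ := fun x => ∑ᶠ y, B x y
  have hr : (Function.support r).Finite := by
    refine (hB.finite_support.image Prod.fst).subset fun x hx => ?_
    obtain ⟨y, hy⟩ : ∃ y, B x y ≠ 0 := by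
      by_contra! h
      exact hx (finsum_eq_zero_of_forall_eq_zero h)
    exact ⟨(x, y), hy, rfl⟩
  have hμfin : (Function.support μu).Finite := by
    refine hr.subset fun x hx => ?_
    have hxu : x ≠ u := fun h => hx (h ▸ hμu)
    simpa [r, hB.marginal_fst x hxu] using hx
  have htotal : ∑ᶠ x, r x = 0 := by
    rw [← hB.sum_zero]
    exact (finsum_curry (fun p : V × V => B p.1 p.2) hB.finite_support).symm
  have hsingle : ∑ᶠ x, (r x + μu x) = r u := by
    rw [finsum_eq_single _ u fun x hx => by simp [r, hB.marginal_fst x hx], hμu, add_zero]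
  rw [finsum_add_distrib hr hμfin, htotal, hμ] at hsingle
  linarith

theorem IsStarCoupling.finsum_row_lazy (hB : IsStarCoupling μu μv u v B)
    (hμ : ∑ᶠ x, μu x = 1) (hμu : μu u = 0) (α : ℝ) (x : V) :
    ∑ᶠ y, ((if x = u ∧ y = v then (1 : ℝ) else 0) - (1 - α) * B x y) =
      Function.update ((1 - α) • μu) u α x := by
  have hind : (Function.support fun y => if x = u ∧ y = v then (1 : ℝ) else 0).Finite :=
    (Set.finite_singleton v).subset fun y hy => by_contra fun h => hy (if_neg fun h' => h h'.2)
  have hrow :=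
    (hB.finite_support_row x).subset (Function.support_mul_subset_right (fun _ => 1 - α) _)
  rw [finsum_sub_distrib hind hrow, ← mul_finsum]
  by_cases hx : x = u
  · subst hx
    simp only [true_and, hB.finsum_row_self hμ hμu, Function.update_self]
    rw [finsum_eq_single _ v fun y hy => if_neg hy, if_pos rfl]
    ring
  · simp [hx, hB.marginal_fst x hx]

theorem IsStarCoupling.isCoupling_lazy (hB : IsStarCoupling μu μv u v B)
    (hμu : ∑ᶠ x, μu x = 1) (hμuu : μu u = 0) (hμv : ∑ᶠ y, μv y = 1) (hμvv : μv v = 0)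
    {α : ℝ} (hα : α ≤ 1) (hle : (1 - α) * B u v ≤ 1) :
    IsCoupling (Function.update ((1 - α) • μu) u α) (Function.update ((1 - α) • μv) v α)
      (fun x y => (if x = u ∧ y = v then (1 : ℝ) else 0) - (1 - α) * B x y) where
  mem_Icc x y := by
    by_cases h : x = u ∧ y = v
    · obtain ⟨rfl, rfl⟩ := h
      simp only [and_self, if_true, Set.mem_Icc]
      constructor <;> nlinarith [hB.pos]
    · have hne : (x, y) ≠ (u, v) := fun h' => h (Prod.ext_iff.mp h')
      simp only [h, if_false, zero_sub, Set.mem_Icc]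
      constructor <;> nlinarith [hB.nonpos x y hne, hB.neg_le hne]
  finite_support := by
    refine (hB.finite_support.union (Set.finite_singleton (u, v))).subset fun p hp => ?_
    by_cases hpuv : p = (u, v)
    · exact Or.inr hpuv
    · refine Or.inl fun hB0 => hp ?_
      dsimp only at hB0 ⊢
      rw [if_neg fun h : p.1 = u ∧ p.2 = v => hpuv (Prod.ext h.1 h.2), hB0, mul_zero, sub_zero]
  marginal_fst := hB.finsum_row_lazy hμu hμuu α
  marginal_snd y := by
    simpa only [and_comm] using hB.transpose.finsum_row_lazy hμv hμvv α y

section Graph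

variable (G : SimpleGraph V) [∀ v : V, Fintype (G.neighborSet v)] (w : V → V → ℝ)

theorem mu_eq_update (α : ℝ) (x : V) :
    mu G w α x = Function.update ((1 - α) • mu G w 0 x) x α := by
  funext z
  by_cases hz : z = x
  · subst hz
    simp [mu]
  · by_cases hadj : G.Adj x z <;> simp [mu, hz, hadj, mul_div_assoc]

theorem mu_zero_self (x : V) : mu G w 0 x x = 0 := if_pos rfl

variable {G w}

theorem deg_pos (hw : ∀ x y : V, G.Adj x y → 0 < w x y) {x y : V} (hxy : G.Adj x y) :
    0 < deg G w x :=
  Finset.sum_pos (fun z hz => hw x z ((G.mem_neighborFinset x z).mp hz))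
    ⟨y, (G.mem_neighborFinset x y).mpr hxy⟩

theorem finsum_mu_zero {x : V} (hdeg : deg G w x ≠ 0) : ∑ᶠ z, mu G w 0 x z = 1 := by
  have hsupp : Function.support (mu G w 0 x) ⊆ G.neighborFinset x := fun z hz => by
    by_contra h
    simp_all [mu]
  calc ∑ᶠ z, mu G w 0 x z
      = ∑ z ∈ G.neighborFinset x, w x z / deg G w x := by
        rw [finsum_eq_sum_of_support_subset _ hsupp]
        refine Finset.sum_congr rfl fun z hz => ?_
        have hadj := (G.mem_neighborFinset x z).mp hz
        simp [mu, hadj, hadj.ne']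
    _ = 1 := by rw [← Finset.sum_div]; exact div_self hdeg

end Graph

end RicciWeighted

open RicciWeighted in
/-- Let `u ∼ v` and let `B` be a `∗`-coupling between `μ_u` and `μ_v`.
For any `α ∈ [0,1)` with `(1−α)B(u,v) ≤ 1`, the function `A = 𝟙_{(u,v)} − (1−α)B` is a
coupling between `μ_u^α` and `μ_v^α`. -/
theorem coupling_of_star_coupling
    {V : Type*} (G : SimpleGraph V) [∀ v : V, Fintype (G.neighborSet v)]
    (hconn : G.Connected)
    (d w : V → V → ℝ)
    (hd_symm : ∀ x y : V, d x y = d y x)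
    (hd_pos : ∀ x y : V, G.Adj x y → 0 < d x y)
    (hw_symm : ∀ x y : V, w x y = w y x)
    (hw_pos : ∀ x y : V, G.Adj x y → 0 < w x y)
    (u v : V) (huv : G.Adj u v)
    (B : V → V → ℝ)
    (hB : IsStarCoupling (mu G w 0 u) (mu G w 0 v) u v B)
    (α : ℝ) (hα : α ∈ Set.Ico (0 : ℝ) 1)
    (hle : (1 - α) * B u v ≤ 1) :
    IsCoupling (mu G w α u) (mu G w α v)
      (fun x y => (if x = u ∧ y = v then (1 : ℝ) else 0) - (1 - α) * B x y) := by
  rw [mu_eq_update G w α u, mu_eq_update G w α v]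
  exact hB.isCoupling_lazy (finsum_mu_zero (deg_pos hw_pos huv).ne') (mu_zero_self G w u)
    (finsum_mu_zero (deg_pos hw_pos huv.symm).ne') (mu_zero_self G w v) hα.2.le hle
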